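/- There is no function w : (0, +∞) → ℝ that is differentiable at every point of (0, +∞) except on a finite set, satisfies the stability condition (i) at every point a at which w is differentiable and w(a) ≠ 0, satisfies w(a) → −1 as a → 1, and satisfies −1 ≤ w(a) ≤ 1 for all a > 0. -/

import Mathlib

/-!
Near `a = 1` the function `w` is close to `-1`, hence negative, and differentiable off a finite
set. For negative `w` the stability condition reads `3 w² ≤ a w'`, so `w' > 0` on some interval
`(a₀, 1)` and `w` is strictly increasing there. A strictly increasing function stays strictly
below its left limit `-1` at `1`, which contradicts `-1 ≤ w`.
-/

open Set Filter Topology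

theorem deriv_pos_of_stability_of_neg {a w w' : ℝ} (ha : 0 < a) (hw : w < 0)
    (h : w - 1 / 3 * a * w' / w ≥ 0) : 0 < w' := by
  have hsq : w * w ≤ 1 / 3 * a * w' := (div_le_iff_of_neg hw).mp (by linarith)
  have hprod : 0 < a * w' := by nlinarith [mul_pos_of_neg_of_neg hw hw]
  exact pos_of_mul_pos_right hprod ha.le

theorem eventually_differentiableAt_nhdsNE {𝕜 E F : Type*} [NontriviallyNormedField 𝕜]
    [NormedAddCommGroup E] [NormedSpace 𝕜 E] [NormedAddCommGroup F] [NormedSpace 𝕜 F]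
    {f : E → F} {s : Set E} {x : E} (hs : s ∈ 𝓝 x)
    (hfin : {t ∈ s | ¬ DifferentiableAt 𝕜 f t}.Finite) :
    ∀ᶠ t in 𝓝[≠] x, DifferentiableAt 𝕜 f t := by
  filter_upwards [hfin.eventually_cofinite_notMem.filter_mono (nhdsNE_le_cofinite x),
    nhdsWithin_le_nhds hs] with t ht hts
  by_contra hnd
  exact ht ⟨hts, hnd⟩

theorem StrictMonoOn.lt_of_tendsto_nhdsLT {α β : Type*} [LinearOrder α] [TopologicalSpace α]
    [OrderTopology α] [DenselyOrdered α] [Preorder β] [TopologicalSpace β] [ClosedIciTopology β]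
    {f : α → β} {a b x : α} {l : β} (hf : StrictMonoOn f (Ioo a b))
    (hl : Tendsto f (𝓝[<] b) (𝓝 l)) (hx : x ∈ Ioo a b) : f x < l := by
  obtain ⟨y, hxy, hyb⟩ := exists_between hx.2
  have hy : y ∈ Ioo a b := ⟨hx.1.trans hxy, hyb⟩
  have : (𝓝[<] b).NeBot := nhdsLT_neBot_of_exists_lt ⟨a, hx.1.trans hx.2⟩
  have hyl : f y ≤ l := ge_of_tendsto hl <| by
    filter_upwards [Ioo_mem_nhdsLT hyb] with t ht
    exact hf.monotoneOn hy ⟨hy.1.trans ht.1, ht.2⟩ ht.1.le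
  exact (hf hx hy hxy).trans_le hyl

/-- There is no function `w : (0, +∞) → ℝ` that is differentiable at
every point of `(0, +∞)` except on a finite set, satisfies the stability
condition at every `a > 0` where `w` is differentiable and `w a ≠ 0`, satisfies
`w a → -1` as `a → 1`, and satisfies `-1 ≤ w a ≤ 1` for all `a > 0`. -/
theorem stmt_8 :
    ¬ ∃ w : ℝ → ℝ,
      {t ∈ Set.Ioi (0 : ℝ) | ¬ DifferentiableAt ℝ w t}.Finite ∧
      (∀ a > (0 : ℝ), DifferentiableAt ℝ w a → w a ≠ 0 →
        w a - (1 / 3) * a * deriv w a / w a ≥ 0) ∧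
      Filter.Tendsto w (nhdsWithin 1 {(1 : ℝ)}ᶜ) (nhds (-1)) ∧
      (∀ a > (0 : ℝ), -1 ≤ w a ∧ w a ≤ 1) := by
  rintro ⟨w, hfin, hstab, hlim, hbound⟩
  have hlim' : Tendsto w (𝓝[<] 1) (𝓝 (-1)) := hlim.mono_left (nhdsLT_le_nhdsNE 1)
  have hgood : ∀ᶠ t in 𝓝[<] (1 : ℝ), 0 < t ∧ DifferentiableAt ℝ w t ∧ w t < 0 := by
    filter_upwards [Ioo_mem_nhdsLT one_pos,
      (eventually_differentiableAt_nhdsNE (Ioi_mem_nhds one_pos) hfin).filter_mono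
        (nhdsLT_le_nhdsNE 1),
      hlim' (Iio_mem_nhds (by norm_num : (-1 : ℝ) < 0))] with t ht hdt hwt
    exact ⟨ht.1, hdt, hwt⟩
  obtain ⟨a, ha, hsub⟩ := mem_nhdsLT_iff_exists_Ioo_subset.mp hgood
  have hmono : StrictMonoOn w (Ioo a 1) := by
    refine strictMonoOn_of_deriv_pos (convex_Ioo a 1)
      (fun t ht ↦ (hsub ht).2.1.continuousAt.continuousWithinAt) fun t ht ↦ ?_
    rw [interior_Ioo] at ht
    obtain ⟨htpos, hdt, hwt⟩ := hsub ht
    exact deriv_pos_of_stability_of_neg htpos hwt (hstab t htpos hdt hwt.ne)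
  obtain ⟨x, hx⟩ := nonempty_Ioo.mpr (show a < 1 from ha)
  linarith [hmono.lt_of_tendsto_nhdsLT hlim' hx, (hbound x (hsub hx).1).1]
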